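/- Let U ⊆ F_q³ be a set of q² − 2 points that does not determine the points of C, with ∑_{u∈U} u = (0,0,0). Then for every integer l with 0 ≤ l ≤ (q − 1)/2, one has the polynomial identity σ_{2l}(Y,Z,W) = σ₂(Y,Z,W)^l in F_q[Y,Z,W]. -/

import Mathlib

/-- The dot product on `F³`. -/
def dot3 {F : Type*} [Field F] (u v : F × F × F) : F :=
  u.1 * v.1 + u.2.1 * v.2.1 + u.2.2 * v.2.2

/-- The nondegenerate quadratic form `Q(t₀,t₁,t₂) = t₁² − t₀t₂` defining the conic `C`. -/
def quadQ {F : Type*} [Field F] (t : F × F × F) : F :=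
  t.2.1 ^ 2 - t.1 * t.2.2

/-- `U` does not determine the points of the conic `C`:
`Q(u − u') ≠ 0` for all distinct `u, u' ∈ U`. -/
def NoDetermine {F : Type*} [Field F] (U : Finset (F × F × F)) : Prop :=
  ∀ u ∈ U, ∀ u' ∈ U, u ≠ u' → quadQ (u - u') ≠ 0

/-- The line at infinity `l(y,z,w)` meets the conic `C`. -/
def MeetsConic {F : Type*} [Field F] (v : F × F × F) : Prop :=
  ∃ t : F × F × F, t ≠ 0 ∧ quadQ t = 0 ∧ dot3 v t = 0

/-- `σ_i(y,z,w)`: the `i`-th elementary symmetric function of the multiset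
`{u·(y,z,w) : u ∈ U}`. -/
def sigmaU {F : Type*} [Field F] (U : Finset (F × F × F)) (v : F × F × F) (i : ℕ) : F :=
  (U.val.map (fun u => dot3 u v)).esymm i

/-- The linear form `u₀Y + u₁Z + u₂W` in `F[Y,Z,W]` associated to `u ∈ F³`. -/
noncomputable def linForm {F : Type*} [Field F] (u : F × F × F) : MvPolynomial (Fin 3) F :=
  MvPolynomial.C u.1 * MvPolynomial.X 0 + MvPolynomial.C u.2.1 * MvPolynomial.X 1 +
    MvPolynomial.C u.2.2 * MvPolynomial.X 2

/-- `σ_i(Y,Z,W)`: the `i`-th elementary symmetric polynomial of the multiset of linear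
forms `{u₀Y + u₁Z + u₂W : u ∈ U}`, as a polynomial in `F[Y,Z,W]`. -/
noncomputable def sigmaPoly {F : Type*} [Field F] (U : Finset (F × F × F)) (i : ℕ) :
    MvPolynomial (Fin 3) F :=
  (U.val.map linForm).esymm i

/-!
For a direction `v = (y, z, w)` whose line `l(v)` passes through a point `t` of `C`, the values
`u · v` (`u ∈ U`) take each value of `F_q` at most `q` times: two points of `U` with the same
value differ by a vector of `v⊥`, and since `t ∈ v⊥` is isotropic, a second linear form `b`
with `v⊥ ∩ b⊥ = ⟨t⟩` separates them. As `|U| = q² - 2` and `∑ u = 0`, the multiset of values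
is `q` copies of `F_q` minus a pair `{a, -a}`, so
`∏ (X + u · v) · (X² - a²) = (X^q - X)^q = X^{q²} - X^q`.
Comparing coefficients gives `σ_{2l}(v) = a^{2l} = σ₂(v)^l` for `2l < q`.

The difference `σ_{2l} - σ₂^l` is homogeneous of degree `2l < q`. Substituting
`Y = -(mZ + m²W)` (the lines through `(1 : m : m²)`) gives a form in `Z, W` vanishing on `F_q²`,
hence zero; so as a polynomial in `Y` it has the `q` distinct roots `-(mZ + m²W)` and degree
`< q`, hence is zero.
-/

section

open Polynomial

namespace Multiset

variable {R : Type*} [CommRing R]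

theorem esymm_eq_mul_esymm_sub_two_of_prod_mul_eq {M : Multiset R} {A : R} {k : ℕ} (hk : k ≠ 0)
    (hM : (M.map (X + C ·)).prod * (X ^ 2 - C A) = X ^ (card M + 2) - X ^ k)
    {i : ℕ} (hi : 2 ≤ i) (hik : i + k < card M + 2) : M.esymm i = A * M.esymm (i - 2) := by
  have hcoeff := congrArg (coeff · (card M + 2 - i)) hM
  simp only [mul_sub, coeff_sub, mul_comm _ (C A), coeff_C_mul, coeff_mul_X_pow', coeff_X_pow,
    if_pos (show 2 ≤ card M + 2 - i by omega),
    prod_X_add_C_coeff M (show card M + 2 - i - 2 ≤ card M by omega),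
    prod_X_add_C_coeff M (show card M + 2 - i ≤ card M by omega)] at hcoeff
  rw [if_neg (by omega), if_neg (by omega), show card M - (card M + 2 - i - 2) = i by omega,
    show card M - (card M + 2 - i) = i - 2 by omega] at hcoeff
  linear_combination hcoeff

theorem esymm_two_mul_eq_esymm_two_pow_of_prod_mul_eq {M : Multiset R} {A : R} {k : ℕ}
    (hk : k ≠ 0) (hM : (M.map (X + C ·)).prod * (X ^ 2 - C A) = X ^ (card M + 2) - X ^ k)
    {l : ℕ} (hl : 2 * l + k < card M + 2) : M.esymm (2 * l) = M.esymm 2 ^ l := by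
  have hpow : ∀ j ≤ l, M.esymm (2 * j) = A ^ j := by
    intro j
    induction j with
    | zero => simp [esymm, powersetCard_zero_left]
    | succ j ih =>
      intro hj
      rw [esymm_eq_mul_esymm_sub_two_of_prod_mul_eq hk hM (by omega) (by omega),
        show 2 * (j + 1) - 2 = 2 * j by omega, ih (by omega), pow_succ']
  rcases l.eq_zero_or_pos with rfl | hl0
  · simpa using hpow 0 le_rfl
  · rw [hpow l le_rfl, ← mul_one 2, hpow 1 hl0, pow_one]

end Multiset

namespace FiniteField

variable {K : Type*} [Field K] [Fintype K]

theorem prod_X_add_C_univ : ∏ c : K, (X + C c) = X ^ Fintype.card K - X := by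
  have hq : 1 < Fintype.card K := Fintype.one_lt_card
  have hmonic : (X ^ Fintype.card K - X : K[X]).Monic :=
    monic_X_pow_sub (by rw [degree_X]; exact_mod_cast hq)
  have h := prod_multiset_X_sub_C_of_monic_of_roots_card_eq hmonic
    (by rw [roots_X_pow_card_sub_X, X_pow_card_sub_X_natDegree_eq K hq]; rfl)
  rw [roots_X_pow_card_sub_X] at h
  rw [← h]
  exact Fintype.prod_equiv (Equiv.neg K) _ _ (fun c => by simp [sub_eq_add_neg])

theorem prod_map_X_add_C_mul_eq {M : Multiset K} {a : K}
    (hM : M + {a, -a} = Fintype.card K • Finset.univ.val) :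
    (M.map (X + C ·)).prod * (X ^ 2 - C (a ^ 2)) =
      X ^ (Fintype.card K ^ 2) - X ^ Fintype.card K := by
  have h := congrArg (fun s : Multiset K => (s.map (X + C ·)).prod) hM
  simp only [Multiset.map_add, Multiset.prod_add, Multiset.map_nsmul, Multiset.prod_nsmul,
    Multiset.insert_eq_cons, Multiset.map_cons, Multiset.map_singleton, Multiset.prod_cons,
    Multiset.prod_singleton] at h
  rw [show (Finset.univ.val.map (X + C ·)).prod = ∏ c : K, (X + C c) from rfl, prod_X_add_C_univ,
    ← expand_card, map_sub, expand_X, map_pow, expand_X, ← pow_mul, ← sq] at h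
  rw [← h, map_neg, map_pow]
  ring

theorem exists_add_pair_eq_nsmul_univ (hq : 2 < Fintype.card K) {M : Multiset K}
    (hle : M ≤ Fintype.card K • Finset.univ.val)
    (hcard : Multiset.card M = Fintype.card K ^ 2 - 2) (hsum : M.sum = 0) :
    ∃ a : K, M + {a, -a} = Fintype.card K • Finset.univ.val := by
  obtain ⟨D, hD⟩ := Multiset.le_iff_exists_add.1 hle
  have hDcard : Multiset.card D = 2 := by
    have h := congrArg Multiset.card hD
    rw [Multiset.card_nsmul, Multiset.card_add, hcard, Finset.card_val, Finset.card_univ] at h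
    have : 2 ≤ Fintype.card K ^ 2 := by nlinarith
    rw [← sq] at h
    omega
  obtain ⟨x, y, rfl⟩ := Multiset.card_eq_two.1 hDcard
  have hsum_univ : (Finset.univ.val : Multiset K).sum = 0 := by
    simpa using sum_pow_lt_card_sub_one (K := K) 1 (by omega)
  have hxy : x + y = 0 := by
    simpa [hsum, hsum_univ, Multiset.sum_nsmul] using (congrArg Multiset.sum hD).symm
  exact ⟨x, by rwa [← eq_neg_of_add_eq_zero_right hxy, eq_comm]⟩

end FiniteField

end

namespace MvPolynomial

theorem polynomial_eval_finSuccEquiv_eq_aeval {R : Type*} [CommRing R] {n : ℕ}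
    (f : MvPolynomial (Fin (n + 1)) R) (r : MvPolynomial (Fin n) R) :
    (finSuccEquiv R n f).eval r = aeval (Fin.cases r X) f := by
  induction f using MvPolynomial.induction_on with
  | C a => simp [finSuccEquiv_apply]
  | add f g hf hg => simp [hf, hg]
  | mul_X f i hf =>
    cases i using Fin.cases <;> simp [hf, finSuccEquiv_X_zero, finSuccEquiv_X_succ]

theorem IsHomogeneous.eq_zero_of_eval_cases_eq_zero {K : Type*} [Field K]
    [Fintype K] {n d : ℕ} {D : MvPolynomial (Fin (n + 1)) K} (hD : D.IsHomogeneous d)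
    (hd : d < Fintype.card K) {r : K → MvPolynomial (Fin n) K} (hr_inj : Function.Injective r)
    (hr : ∀ m, (r m).IsHomogeneous 1)
    (h : ∀ m (s : Fin n → K), eval (Fin.cases (eval s (r m)) s) D = 0) : D = 0 := by
  have hroot : ∀ m, (finSuccEquiv K n D).eval (r m) = 0 := by
    intro m
    refine IsHomogeneous.eq_zero_of_forall_eval_eq_zero_of_le_card (n := 1 * d) ?_
      (fun s => by rw [eval_polynomial_eval_finSuccEquiv]; exact h m s) (by simpa using hd.le)
    rw [polynomial_eval_finSuccEquiv_eq_aeval]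
    exact hD.aeval _ fun i => by cases i using Fin.cases <;> simp [hr, isHomogeneous_X]
  have hdeg : (finSuccEquiv K n D).natDegree < Fintype.card K := by
    rw [natDegree_finSuccEquiv]
    exact ((degreeOf_le_totalDegree D 0).trans hD.totalDegree_le).trans_lt hd
  simpa using Polynomial.eq_zero_of_natDegree_lt_card_of_eval_eq_zero _ hr_inj hroot hdeg

end MvPolynomial

section

open MvPolynomial

variable {F : Type*} [Field F]

theorem dot3_sub_left (u u' v : F × F × F) : dot3 (u - u') v = dot3 u v - dot3 u' v := by
  simp only [dot3, Prod.fst_sub, Prod.snd_sub]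
  ring

theorem sum_dot3 {ι : Type*} (s : Finset ι) (f : ι → F × F × F) (v : F × F × F) :
    ∑ i ∈ s, dot3 (f i) v = dot3 (∑ i ∈ s, f i) v := by
  simp only [dot3, Prod.fst_sum, Prod.snd_sum, Finset.sum_add_distrib, Finset.sum_mul]

theorem dot3_zero_right (u : F × F × F) : dot3 u 0 = 0 := by
  simp [dot3]

theorem exists_forall_quadQ_eq_zero {m : F} {v : F × F × F} (hv : v ≠ 0)
    (hvm : dot3 v (1, m, m ^ 2) = 0) :
    ∃ b : F × F × F, ∀ d, dot3 d v = 0 → dot3 d b = 0 → quadQ d = 0 := by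
  obtain ⟨y, z, w⟩ := v
  simp only [dot3] at hvm
  by_cases hw : w = 0
  · have hz : z ≠ 0 := by
      rintro rfl
      subst hw
      exact hv (by simpa using hvm)
    refine ⟨(-m ^ 2, 0, 1), fun ⟨d₀, d₁, d₂⟩ hdv hdb => ?_⟩
    simp only [dot3, quadQ] at hdv hdb ⊢
    have h₂ : d₂ = m ^ 2 * d₀ := by linear_combination hdb
    have h₁ : d₁ = m * d₀ :=
      mul_left_cancel₀ hz (by linear_combination hdv - d₀ * hvm - w * hdb)
    rw [h₁, h₂]
    ring
  · refine ⟨(-m, 1, 0), fun ⟨d₀, d₁, d₂⟩ hdv hdb => ?_⟩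
    simp only [dot3, quadQ] at hdv hdb ⊢
    have h₁ : d₁ = m * d₀ := by linear_combination hdb
    have h₂ : d₂ = m ^ 2 * d₀ :=
      mul_left_cancel₀ hw (by linear_combination hdv - d₀ * hvm - z * hdb)
    rw [h₁, h₂]
    ring

theorem NoDetermine.map_dot3_le_nsmul_univ [Fintype F] {U : Finset (F × F × F)}
    (hU : NoDetermine U) {v b : F × F × F}
    (hb : ∀ d, dot3 d v = 0 → dot3 d b = 0 → quadQ d = 0) :
    U.val.map (dot3 · v) ≤ Fintype.card F • Finset.univ.val := by
  classical
  refine Multiset.le_iff_count.2 fun c => ?_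
  rw [Multiset.count_nsmul, Multiset.count_univ, mul_one, Multiset.count_map]
  change (U.filter (c = dot3 · v)).card ≤ _
  refine (Finset.card_le_card_of_injOn (dot3 · b) (fun _ _ => Finset.mem_univ _) ?_).trans
    Finset.card_univ.le
  intro u hu u' hu' hbu
  simp only [Finset.coe_filter, Set.mem_ofPred_eq] at hu hu'
  by_contra hne
  exact hU u hu.1 u' hu'.1 hne <| hb _ (by rw [dot3_sub_left, ← hu.2, ← hu'.2, sub_self])
    (by rw [dot3_sub_left, sub_eq_zero]; exact hbu)

theorem sigmaU_zero (U : Finset (F × F × F)) {i : ℕ} (hi : i ≠ 0) : sigmaU U 0 i = 0 := by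
  rw [sigmaU, Finset.esymm_map_val]
  refine Finset.sum_eq_zero fun t ht => ?_
  simp [dot3_zero_right, (Finset.mem_powersetCard.1 ht).2, hi]

theorem sigmaU_two_mul_eq_pow [Fintype F] (hq : 2 < Fintype.card F) {U : Finset (F × F × F)}
    (hUcard : U.card = Fintype.card F ^ 2 - 2) (hU : NoDetermine U) (hsum : ∑ u ∈ U, u = 0)
    {m : F} {v : F × F × F} (hvm : dot3 v (1, m, m ^ 2) = 0) {l : ℕ}
    (hl : 2 * l < Fintype.card F) : sigmaU U v (2 * l) = sigmaU U v 2 ^ l := by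
  rcases eq_or_ne v 0 with rfl | hv
  · rcases l.eq_zero_or_pos with rfl | hl0
    · simp [sigmaU, Multiset.esymm, Multiset.powersetCard_zero_left]
    · rw [sigmaU_zero U (by omega), sigmaU_zero U two_ne_zero, zero_pow hl0.ne']
  obtain ⟨b, hb⟩ := exists_forall_quadQ_eq_zero hv hvm
  set M := U.val.map (dot3 · v)
  have hMcard : Multiset.card M = Fintype.card F ^ 2 - 2 := by simpa [M] using hUcard
  have hMsum : M.sum = 0 := by
    rw [show M.sum = ∑ u ∈ U, dot3 u v from rfl, sum_dot3, hsum]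
    simp [dot3]
  obtain ⟨a, ha⟩ :=
    FiniteField.exists_add_pair_eq_nsmul_univ hq (hU.map_dot3_le_nsmul_univ hb) hMcard hMsum
  have hprod := FiniteField.prod_map_X_add_C_mul_eq ha
  have hq_sq : 2 * Fintype.card F ≤ Fintype.card F ^ 2 := by nlinarith
  have hq2 : Fintype.card F ^ 2 = Multiset.card M + 2 := by omega
  rw [hq2] at hprod
  exact Multiset.esymm_two_mul_eq_esymm_two_pow_of_prod_mul_eq (by omega) hprod
    (by rw [← hq2]; omega)

theorem isHomogeneous_linForm (u : F × F × F) : (linForm u).IsHomogeneous 1 :=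
  ((isHomogeneous_C_mul_X _ _).add (isHomogeneous_C_mul_X _ _)).add (isHomogeneous_C_mul_X _ _)

theorem isHomogeneous_sigmaPoly (U : Finset (F × F × F)) (i : ℕ) :
    (sigmaPoly U i).IsHomogeneous i := by
  rw [sigmaPoly, Finset.esymm_map_val]
  refine IsHomogeneous.sum _ _ _ fun t ht => ?_
  simpa [(Finset.mem_powersetCard.1 ht).2] using
    IsHomogeneous.prod t linForm (fun _ => 1) fun u _ => isHomogeneous_linForm u

theorem eval_sigmaPoly (U : Finset (F × F × F)) (i : ℕ) (x : Fin 3 → F) :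
    eval x (sigmaPoly U i) = sigmaU U (x 0, x 1, x 2) i := by
  simp [sigmaPoly, sigmaU, Finset.esymm_map_val, linForm, dot3, mul_comm]

noncomputable def conicPencil (m : F) : MvPolynomial (Fin 2) F :=
  -(C m * X 0 + C (m ^ 2) * X 1)

theorem isHomogeneous_conicPencil (m : F) : (conicPencil m).IsHomogeneous 1 :=
  ((isHomogeneous_C_mul_X _ _).add (isHomogeneous_C_mul_X _ _)).neg

theorem conicPencil_injective : Function.Injective (conicPencil (F := F)) := fun m m' h => by
  simpa [conicPencil] using congrArg (eval ![-1, 0]) h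

theorem dot3_eval_conicPencil (m : F) (s : Fin 2 → F) :
    dot3 (eval s (conicPencil m), s 0, s 1) (1, m, m ^ 2) = 0 := by
  simp only [dot3, conicPencil, map_neg, map_add, map_mul, eval_C, eval_X]
  ring

end

theorem stmt_7_general {p h : ℕ} (hodd : Odd p)
    {F : Type*} [Field F] [Fintype F]
    (hcard : Fintype.card F = p ^ h)
    (U : Finset (F × F × F))
    (hUcard : U.card = Fintype.card F ^ 2 - 2)
    (hU : NoDetermine U)
    (hsum : ∑ u ∈ U, u = 0) :
    ∀ l : ℕ, l ≤ (Fintype.card F - 1) / 2 → sigmaPoly U (2 * l) = sigmaPoly U 2 ^ l := by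
  intro l hl
  have hq : 2 < Fintype.card F := by
    obtain ⟨k, hk⟩ : Odd (Fintype.card F) := hcard ▸ hodd.pow
    have : 1 < Fintype.card F := Fintype.one_lt_card
    omega
  have h2l : 2 * l < Fintype.card F := by omega
  have hD := (isHomogeneous_sigmaPoly U (2 * l)).sub ((isHomogeneous_sigmaPoly U 2).pow l)
  rw [← sub_eq_zero]
  refine hD.eq_zero_of_eval_cases_eq_zero h2l conicPencil_injective isHomogeneous_conicPencil
    fun m s => ?_
  rw [map_sub, map_pow, eval_sigmaPoly, eval_sigmaPoly, sub_eq_zero]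
  exact sigmaU_two_mul_eq_pow hq hUcard hU hsum (dot3_eval_conicPencil m s) h2l

theorem stmt_7 {p h : ℕ} (hp : p.Prime) (hodd : Odd p) (hh : 1 ≤ h)
    {F : Type*} [Field F] [Fintype F] [DecidableEq F]
    (hcard : Fintype.card F = p ^ h)
    (U : Finset (F × F × F))
    (hUcard : U.card = Fintype.card F ^ 2 - 2)
    (hU : NoDetermine U)
    (hsum : ∑ u ∈ U, u = 0) :
    ∀ l : ℕ, l ≤ (Fintype.card F - 1) / 2 → sigmaPoly U (2 * l) = sigmaPoly U 2 ^ l :=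
  stmt_7_general hodd hcard U hUcard hU hsum
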